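/- arXiv:math/0510435 — 3 statements merged into one kernel-verified Lean document; each statement's English description precedes it below -/
import Mathlib

section
/- Every proper biharmonic arc-length curve γ in the Cartan-Vranceanu space (M, ds²_{ℓ,m}) with ℓ² ≠ 4m and m ≠ 0 is a helix: both its geodesic curvature k and geodesic torsion τ are constant. Moreover N3 = 0 along γ. -/
/-! Set `a = ℓ² − 4m ≠ 0`. Differentiating the constant `τ² + a B3² = ℓ²/4 − k²` and substituting
`τ' = a N3 B3` gives `a B3 (τ N3 + B3') = 0`, so `τ N3 = −B3'`; together with the frame identity
this forces `N3 (4τ + ℓ) = 0`, hence `(τ + ℓ/4) τ' = 0`. Then `(τ + ℓ/4)²` has zero derivative, so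
either `τ ≡ −ℓ/4` or `τ + ℓ/4` never vanishes and `τ' ≡ 0`; in both cases `τ` is constant, and
`0 = τ' = a N3 B3` gives `N3 = 0`. -/

lemma mul_deriv_add_mul_mul_deriv_eq_zero {f g : ℝ → ℝ} {a C : ℝ}
    (hf : Differentiable ℝ f) (hg : Differentiable ℝ g) (h : ∀ t, f t ^ 2 + a * g t ^ 2 = C)
    (t : ℝ) : f t * deriv f t + a * (g t * deriv g t) = 0 := by
  have hderiv : HasDerivAt (fun t => f t ^ 2 + a * g t ^ 2)
      (2 * (f t * deriv f t + a * (g t * deriv g t))) t :=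
    ((hf t).hasDerivAt.fun_pow 2).fun_add (((hg t).hasDerivAt.fun_pow 2).const_mul a)
      |>.congr_deriv (by push_cast; ring)
  have hconst : (fun t => f t ^ 2 + a * g t ^ 2) = fun _ => C := funext h
  rw [hconst] at hderiv
  linarith [hderiv.unique (hasDerivAt_const t C)]

lemma exists_eq_const_of_sub_mul_deriv_eq_zero {f : ℝ → ℝ} {a : ℝ} (hf : Differentiable ℝ f)
    (h : ∀ t, (f t - a) * deriv f t = 0) : ∃ c, ∀ t, f t = c := by
  have hsq (t : ℝ) : HasDerivAt (fun t => (f t - a) ^ 2) 0 t :=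
    ((hf t).hasDerivAt.sub_const a).fun_pow 2 |>.congr_deriv (by
      push_cast; linear_combination 2 * h t)
  have hsq_const (t : ℝ) : (f t - a) ^ 2 = (f 0 - a) ^ 2 :=
    is_const_of_deriv_eq_zero (fun t => (hsq t).differentiableAt) (fun t => (hsq t).deriv) t 0
  by_cases h0 : f 0 = a
  · exact ⟨a, fun t => by simpa [h0, sub_eq_zero] using hsq_const t⟩
  · have hne (t : ℝ) : f t - a ≠ 0 := fun ht => h0 <| by
      simpa [ht, eq_comm (a := (0 : ℝ)), sub_eq_zero] using hsq_const t
    have hderiv (t : ℝ) : deriv f t = 0 := (mul_eq_zero.mp (h t)).resolve_left (hne t)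
    exact ⟨f 0, fun t => is_const_of_deriv_eq_zero hf hderiv t 0⟩

theorem proper_biharmonic_is_helix_general (l m : ℝ) (hlm : l^2 ≠ 4*m)
    (k τ N3 B3 : ℝ → ℝ)
    (hτd : Differentiable ℝ τ) (hB3d : Differentiable ℝ B3)
    (c : ℝ) (hk : ∀ t, k t = c)
    (h2 : ∀ t, (k t)^2 + (τ t)^2 = l^2/4 - (l^2 - 4*m) * (B3 t)^2)
    (h3 : ∀ t, deriv τ t = (l^2 - 4*m) * N3 t * B3 t)
    (h4 : ∀ t, τ t * N3 t = deriv B3 t - (l/2) * N3 t)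
    (hB3 : ∀ t, B3 t ≠ 0) :
    (∃ c' : ℝ, ∀ t, τ t = c') ∧ (∀ t, N3 t = 0) := by
  have ha : l ^ 2 - 4 * m ≠ 0 := sub_ne_zero.mpr hlm
  have hτN3 (t : ℝ) : τ t * N3 t + deriv B3 t = 0 := by
    have hdiff := mul_deriv_add_mul_mul_deriv_eq_zero hτd hB3d
      (a := l ^ 2 - 4 * m) (C := l ^ 2 / 4 - c ^ 2) (fun t => by rw [← hk t]; linarith [h2 t]) t
    rw [h3 t] at hdiff
    have : (l ^ 2 - 4 * m) * B3 t * (τ t * N3 t + deriv B3 t) = 0 := by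
      linear_combination hdiff
    exact (mul_eq_zero.mp this).resolve_left (mul_ne_zero ha (hB3 t))
  obtain ⟨c', hτ⟩ : ∃ c', ∀ t, τ t = c' :=
    exists_eq_const_of_sub_mul_deriv_eq_zero (a := -l / 4) hτd fun t => by
      linear_combination (τ t + l / 4) * h3 t + (l ^ 2 - 4 * m) * B3 t / 2 * (h4 t + hτN3 t)
  refine ⟨⟨c', hτ⟩, fun t => ?_⟩
  have hderiv : deriv τ t = 0 := by simp [funext hτ]
  simpa [h3 t, ha, hB3 t] using hderiv

/-- every proper biharmonic arc-length curve of the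
Cartan-Vranceanu space `(M, ds²_{ℓ,m})` with `ℓ² ≠ 4m`, `m ≠ 0` is a helix:
its geodesic curvature `k` (constant by hypothesis) and its geodesic torsion
`τ` are constant; moreover `N3 = 0` along the curve. -/
theorem proper_biharmonic_is_helix (l m : ℝ) (hm : m ≠ 0) (hlm : l^2 ≠ 4*m)
    (k τ N3 B3 : ℝ → ℝ)
    (hτd : Differentiable ℝ τ) (hB3d : Differentiable ℝ B3)
    (c : ℝ) (hc : c ≠ 0) (hk : ∀ t, k t = c)
    (h2 : ∀ t, (k t)^2 + (τ t)^2 = l^2/4 - (l^2 - 4*m) * (B3 t)^2)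
    (h3 : ∀ t, deriv τ t = (l^2 - 4*m) * N3 t * B3 t)
    (h4 : ∀ t, τ t * N3 t = deriv B3 t - (l/2) * N3 t)
    (hB3 : ∀ t, B3 t ≠ 0) :
    (∃ c' : ℝ, ∀ t, τ t = c') ∧ (∀ t, N3 t = 0) :=
  proper_biharmonic_is_helix_general l m hlm k τ N3 B3 hτd hB3d c hk h2 h3 h4 hB3
end

section
/- With T = sin α0 cos β E1 + sin α0 sin β E2 + cos α0 E3 and N = −sin β E1 + cos β E2, the binormal is B = T × N = −cos α0 cos β E1 − cos α0 sin β E2 + sin α0 E3, and the geodesic torsion satisfies τ = −ω cos α0 − ℓ/2, where ω = β' + 2my sin α0 cos β − 2mx sin α0 sin β − ℓ cos α0. -/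
/-
The vertical component `sin α0` of `B = T × N` is constant, so `∇_T B` is the derivative
of the horizontal part of `B` plus connection terms bilinear in `B` and `T`. Pairing with
`N`, every term carries a factor `sin² β + cos² β`, leaving
`−(β' + 2my sin α0 cos β − 2mx sin α0 sin β) cos α0 + (ℓ/2)(cos² α0 − sin² α0)`,
which is `−ω cos α0 − ℓ/2` because `cos² α0 − sin² α0 = 2 cos² α0 − 1`.
-/

noncomputable section

open Real

/-- The quantity `ω = β' + 2my sin α0 cos β − 2mx sin α0 sin β − ℓ cos α0`. -/
def omega (l m α0 : ℝ) (x y β : ℝ → ℝ) (t : ℝ) : ℝ :=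
  deriv β t + 2*m*y t*sin α0*cos (β t) - 2*m*x t*sin α0*sin (β t) - l*cos α0

theorem cross_spherical_horizontal (a b : ℝ) :
    crossProduct ![sin a * cos b, sin a * sin b, cos a] ![-sin b, cos b, 0]
      = ![-cos a * cos b, -cos a * sin b, sin a] := by
  rw [cross_apply]
  ext i
  fin_cases i <;> simp
  linear_combination sin a * sin_sq_add_cos_sq b

theorem binormal_and_torsion_general (l m α0 : ℝ)
    (x y β : ℝ → ℝ) (hβ : Differentiable ℝ β) :
    ∀ t : ℝ,
    let T1 : ℝ → ℝ := fun s => sin α0 * cos (β s)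
    let T2 : ℝ → ℝ := fun s => sin α0 * sin (β s)
    let T3 : ℝ → ℝ := fun _ => cos α0
    let N1 : ℝ → ℝ := fun s => -sin (β s)
    let N2 : ℝ → ℝ := fun s => cos (β s)
    let N3 : ℝ → ℝ := fun _ => 0
    -- components of `B = T × N`
    let B1 : ℝ → ℝ := fun s => T2 s * N3 s - T3 s * N2 s
    let B2 : ℝ → ℝ := fun s => T3 s * N1 s - T1 s * N3 s
    let B3 : ℝ → ℝ := fun s => T1 s * N2 s - T2 s * N1 s
    -- components of `∇_T B` via the Cartan-Vranceanu connection coefficients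
    let C1 := deriv B1 t
      + B2 t * (-2*m*y t*T1 t + 2*m*x t*T2 t + (l/2)*T3 t) + B3 t * ((l/2)*T2 t)
    let C2 := deriv B2 t
      + B1 t * (2*m*y t*T1 t - 2*m*x t*T2 t - (l/2)*T3 t) + B3 t * (-(l/2)*T1 t)
    let C3 := deriv B3 t + B1 t * (-(l/2)*T2 t) + B2 t * ((l/2)*T1 t)
    -- the binormal
    (B1 t = -cos α0 * cos (β t) ∧ B2 t = -cos α0 * sin (β t) ∧ B3 t = sin α0) ∧
    -- the geodesic torsion `τ = ⟨∇_T B, N⟩`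
    C1 * N1 t + C2 * N2 t + C3 * N3 t
      = -(omega l m α0 x y β t) * cos α0 - l/2 := by
  intro t T1 T2 T3 N1 N2 N3 B1 B2 B3 C1 C2 C3
  have hB1 : B1 = fun s => -cos α0 * cos (β s) :=
    funext fun s => congrFun (cross_spherical_horizontal α0 (β s)) 0
  have hB2 : B2 = fun s => -cos α0 * sin (β s) :=
    funext fun s => congrFun (cross_spherical_horizontal α0 (β s)) 1
  have hB3 : B3 = fun _ => sin α0 :=
    funext fun s => congrFun (cross_spherical_horizontal α0 (β s)) 2
  have hβt := (hβ t).hasDerivAt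
  have dB1 := (hβt.cos.const_mul (-cos α0)).deriv
  have dB2 := (hβt.sin.const_mul (-cos α0)).deriv
  refine ⟨⟨congrFun hB1 t, congrFun hB2 t, congrFun hB3 t⟩, ?_⟩
  set P := 2*m*y t*sin α0*cos (β t) - 2*m*x t*sin α0*sin (β t)
  calc C1 * N1 t + C2 * N2 t + C3 * N3 t
      = (sin (β t) ^ 2 + cos (β t) ^ 2)
          * (-(deriv β t + P) * cos α0 + l/2 * (cos α0 ^ 2 - sin α0 ^ 2)) := by
        simp only [C1, C2, C3, hB1, hB2, hB3, dB1, dB2, deriv_const, T1, T2, T3, N1, N2, N3, P]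
        ring
    _ = -(omega l m α0 x y β t) * cos α0 - l/2 := by
        rw [sin_sq_add_cos_sq, omega]
        linear_combination (-l/2) * sin_sq_add_cos_sq α0

/-- with `T = sin α0 cos β E1 + sin α0 sin β E2 + cos α0 E3` and
`N = −sin β E1 + cos β E2`, the binormal `B = T × N` (cross product of the
component vectors in the oriented orthonormal frame) is
`B = −cos α0 cos β E1 − cos α0 sin β E2 + sin α0 E3`, and the geodesic torsion
`τ = ⟨∇_T B, N⟩` (with `∇_T B` computed from the Cartan-Vranceanu connection
coefficients) equals `−ω cos α0 − ℓ/2`. -/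
theorem binormal_and_torsion (l m α0 : ℝ) (hα : α0 ∈ Set.Ioo (0:ℝ) π)
    (x y β : ℝ → ℝ) (hβ : Differentiable ℝ β) :
    ∀ t : ℝ,
    let T1 : ℝ → ℝ := fun s => sin α0 * cos (β s)
    let T2 : ℝ → ℝ := fun s => sin α0 * sin (β s)
    let T3 : ℝ → ℝ := fun _ => cos α0
    let N1 : ℝ → ℝ := fun s => -sin (β s)
    let N2 : ℝ → ℝ := fun s => cos (β s)
    let N3 : ℝ → ℝ := fun _ => 0
    -- components of `B = T × N`
    let B1 : ℝ → ℝ := fun s => T2 s * N3 s - T3 s * N2 s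
    let B2 : ℝ → ℝ := fun s => T3 s * N1 s - T1 s * N3 s
    let B3 : ℝ → ℝ := fun s => T1 s * N2 s - T2 s * N1 s
    -- components of `∇_T B` via the Cartan-Vranceanu connection coefficients
    let C1 := deriv B1 t
      + B2 t * (-2*m*y t*T1 t + 2*m*x t*T2 t + (l/2)*T3 t) + B3 t * ((l/2)*T2 t)
    let C2 := deriv B2 t
      + B1 t * (2*m*y t*T1 t - 2*m*x t*T2 t - (l/2)*T3 t) + B3 t * (-(l/2)*T1 t)
    let C3 := deriv B3 t + B1 t * (-(l/2)*T2 t) + B2 t * ((l/2)*T1 t)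
    -- the binormal
    (B1 t = -cos α0 * cos (β t) ∧ B2 t = -cos α0 * sin (β t) ∧ B3 t = sin α0) ∧
    -- the geodesic torsion `τ = ⟨∇_T B, N⟩`
    C1 * N1 t + C2 * N2 t + C3 * N3 t
      = -(omega l m α0 x y β t) * cos α0 - l/2 :=
  binormal_and_torsion_general l m α0 x y β hβ
end
end

section
/- Let x(t) = b sin α0 sin β(t) + c, y(t) = −b sin α0 cos β(t) + d with 1 + m(x² + y²) = b β' and ω = β' + 2my sin α0 cos β − 2mx sin α0 sin β − ℓ cos α0 equal to a constant ω0. Then β satisfies the ODE β' + 2md sin α0 cos β − 2mc sin α0 sin β = ℓ cos α0 + 2mb sin²α0 + ω0, and the constants satisfy c² + d² = (b/m)·[(ℓ cos α0 + ω0 − 1/b) + mb sin²α0]. -/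
/-! Everything is pointwise algebra on the circle `(x - c, y - d) = b sin α0 (sin β, -cos β)`:
`sin² + cos² = 1` turns `ω` into the stated ODE, and subtracting `b` times the ODE from
`1 + m(x² + y²) = b β'` at any single time (say `t = 0`) leaves the relation for `c² + d²`. -/

noncomputable section

open Real

section CircleOrbit

variable {m b s c d L ω0 θ v x y : ℝ}

theorem ode_of_omega_eq (hx : x = b * s * sin θ + c) (hy : y = -b * s * cos θ + d)
    (hω : v + 2 * m * y * s * cos θ - 2 * m * x * s * sin θ - L = ω0) :
    v + 2 * m * d * s * cos θ - 2 * m * c * s * sin θ = L + 2 * m * b * s ^ 2 + ω0 := by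
  subst hx hy
  linear_combination hω + 2 * m * b * s ^ 2 * sin_sq_add_cos_sq θ

theorem sq_add_sq_eq_of_ode (hm : m ≠ 0) (hb : b ≠ 0)
    (hx : x = b * s * sin θ + c) (hy : y = -b * s * cos θ + d)
    (hF : 1 + m * (x ^ 2 + y ^ 2) = b * v)
    (hode : v + 2 * m * d * s * cos θ - 2 * m * c * s * sin θ = L + 2 * m * b * s ^ 2 + ω0) :
    c ^ 2 + d ^ 2 = (b / m) * ((L + ω0 - 1 / b) + m * b * s ^ 2) := by
  have hsq : x ^ 2 + y ^ 2 = (b * s) ^ 2 + c ^ 2 + d ^ 2 + 2 * b * s * (c * sin θ - d * cos θ) := by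
    subst hx hy
    linear_combination (b * s) ^ 2 * sin_sq_add_cos_sq θ
  rw [hsq] at hF
  field_simp
  linear_combination hF + b * hode

end CircleOrbit

theorem typeI_beta_ode_and_constraint_general (l m : ℝ) (hm : m ≠ 0)
    (α0 : ℝ)
    (b c d ω0 : ℝ) (hb : 0 < b)
    (x y β : ℝ → ℝ)
    (hxdef : ∀ t, x t = b * sin α0 * sin (β t) + c)
    (hydef : ∀ t, y t = -b * sin α0 * cos (β t) + d)
    (hFb : ∀ t, 1 + m*((x t)^2 + (y t)^2) = b * deriv β t)
    (hω : ∀ t, deriv β t + 2*m*y t*sin α0*cos (β t) - 2*m*x t*sin α0*sin (β t)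
      - l*cos α0 = ω0) :
    (∀ t, deriv β t + 2*m*d*sin α0*cos (β t) - 2*m*c*sin α0*sin (β t)
      = l*cos α0 + 2*m*b*(sin α0)^2 + ω0) ∧
    c^2 + d^2 = (b/m) * ((l*cos α0 + ω0 - 1/b) + m*b*(sin α0)^2) := by
  have ode : ∀ t, deriv β t + 2*m*d*sin α0*cos (β t) - 2*m*c*sin α0*sin (β t)
      = l*cos α0 + 2*m*b*(sin α0)^2 + ω0 :=
    fun t => ode_of_omega_eq (hxdef t) (hydef t) (hω t)
  exact ⟨ode, sq_add_sq_eq_of_ode hm hb.ne' (hxdef 0) (hydef 0) (hFb 0) (ode 0)⟩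

/-- for `x = b sin α0 sin β + c`, `y = −b sin α0 cos β + d` with
`1 + m(x²+y²) = b β'` and `ω = β' + 2my sin α0 cos β − 2mx sin α0 sin β − ℓ cos α0`
constant equal to `ω0`, the function `β` satisfies the ODE
`β' + 2md sin α0 cos β − 2mc sin α0 sin β = ℓ cos α0 + 2mb sin²α0 + ω0`,
and the constants satisfy
`c² + d² = (b/m)[(ℓ cos α0 + ω0 − 1/b) + mb sin²α0]`. -/
theorem typeI_beta_ode_and_constraint (l m : ℝ) (hm : m ≠ 0)
    (α0 : ℝ) (hα : α0 ∈ Set.Ioo (0:ℝ) π)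
    (b c d ω0 : ℝ) (hb : 0 < b)
    (x y β : ℝ → ℝ) (hβ : Differentiable ℝ β) (hβ' : ∀ t, 0 < deriv β t)
    (hxdef : ∀ t, x t = b * sin α0 * sin (β t) + c)
    (hydef : ∀ t, y t = -b * sin α0 * cos (β t) + d)
    (hFb : ∀ t, 1 + m*((x t)^2 + (y t)^2) = b * deriv β t)
    (hω : ∀ t, deriv β t + 2*m*y t*sin α0*cos (β t) - 2*m*x t*sin α0*sin (β t)
      - l*cos α0 = ω0) :
    (∀ t, deriv β t + 2*m*d*sin α0*cos (β t) - 2*m*c*sin α0*sin (β t)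
      = l*cos α0 + 2*m*b*(sin α0)^2 + ω0) ∧
    c^2 + d^2 = (b/m) * ((l*cos α0 + ω0 - 1/b) + m*b*(sin α0)^2) :=
  typeI_beta_ode_and_constraint_general l m hm α0 b c d ω0 hb x y β hxdef hydef hFb hω
end
end
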